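/- Under the same setting, the variance bound E‖(1/n)∑_{τ=1}^n (∇f_{i_k^τ}^{(τ)}(x^k) − ∇f_{i_k^τ}^{(τ)}(w^k)) + ∇f(w^k) − ∇f(x^k)‖² ≤ (4L/n)[P(x^k) − P(x*) + P(w^k) − P(x*)] holds, where i_k^τ is uniform on [m], independent across τ. -/

import Mathlib

/-!
Write `v τ i = ∇f_i^τ(x) - ∇f_i^τ(w)`. The vector in the norm is the average over `τ` of the
independent, centred vectors `v τ (σ τ) - 𝔼 v τ`; cross terms vanish, so its second moment is
`(1/n²) ∑_τ Var(v τ) ≤ (1/(n² m)) ∑_{τ,i} ‖v τ i‖²`.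
For a convex function with `L`-Lipschitz gradient, co-coercivity gives
`‖∇f(x) - ∇f(z)‖² ≤ 2L D_f(x, z)` with `D_f` the Bregman divergence; taking `z = x*` bounds each
`‖v τ i‖²` by `4L (D(x, x*) + D(w, x*))`. These divergences average to `D_F`, and since `-∇F(x*)`
is a subgradient of `ψ` at the minimiser `x*` of `P = F + ψ`, `D_F(y, x*) ≤ P(y) - P(x*)`.
-/

open scoped InnerProductSpace NNReal
open Set Finset

def bregmanDiv {E : Type*} [NormedAddCommGroup E] [InnerProductSpace ℝ E]
    (f : E → ℝ) (g : E → E) (x y : E) : ℝ :=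
  f x - f y - ⟪g y, x - y⟫_ℝ

section Smooth

variable {E : Type*} [NormedAddCommGroup E] [InnerProductSpace ℝ E] [CompleteSpace E]
  {f : E → ℝ} {g : E → E} {x y g' : E}

theorem HasGradientAt.hasDerivAt_comp_lineMap {t : ℝ}
    (h : HasGradientAt f g' (AffineMap.lineMap x y t)) :
    HasDerivAt (f ∘ AffineMap.lineMap x y) ⟪g', y - x⟫_ℝ t := by
  simpa using h.hasFDerivAt.comp_hasDerivAt t AffineMap.hasDerivAt_lineMap

theorem ConvexOn.add_inner_le (hf : ConvexOn ℝ univ f) (hg : HasGradientAt f g' x) (y : E) :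
    f x + ⟪g', y - x⟫_ℝ ≤ f y := by
  have hline : ConvexOn ℝ univ (f ∘ AffineMap.lineMap (k := ℝ) x y) := by
    simpa using hf.comp_affineMap (AffineMap.lineMap x y : ℝ →ᵃ[ℝ] E)
  have hslope := hline.le_slope_of_hasDerivAt (mem_univ 0) (mem_univ 1) zero_lt_one
    (HasGradientAt.hasDerivAt_comp_lineMap (y := y) (t := 0) (by simpa using hg))
  simp only [slope_def_field, Function.comp_apply, AffineMap.lineMap_apply_one,
    AffineMap.lineMap_apply_zero, sub_zero, div_one] at hslope
  linarith

theorem le_add_inner_add_sq_of_lipschitzWith {K : ℝ≥0} (hg : ∀ u, HasGradientAt f (g u) u)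
    (hK : LipschitzWith K g) (x y : E) :
    f y ≤ f x + ⟪g x, y - x⟫_ℝ + K / 2 * ‖y - x‖ ^ 2 := by
  set h : ℝ → ℝ := fun t => (f ∘ AffineMap.lineMap x y) t - t * ⟪g x, y - x⟫_ℝ
    - K / 2 * t ^ 2 * ‖y - x‖ ^ 2
  have hderiv : ∀ t, HasDerivAt h
      (⟪g (AffineMap.lineMap x y t) - g x, y - x⟫_ℝ - K * t * ‖y - x‖ ^ 2) t := by
    intro t
    have := (((hg _).hasDerivAt_comp_lineMap (x := x) (y := y) (t := t)).sub
      ((hasDerivAt_id t).mul_const ⟪g x, y - x⟫_ℝ)).sub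
      (((hasDerivAt_pow 2 t).const_mul (K / 2 : ℝ)).mul_const (‖y - x‖ ^ 2))
    refine this.congr_deriv ?_
    simp only [inner_sub_left, Nat.cast_ofNat, Nat.add_one_sub_one, pow_one]
    ring
  have hnonpos : ∀ t ∈ interior (Ici (0 : ℝ)),
      ⟪g (AffineMap.lineMap x y t) - g x, y - x⟫_ℝ - K * t * ‖y - x‖ ^ 2 ≤ 0 := by
    intro t ht
    rw [interior_Ici] at ht
    refine sub_nonpos.2 ?_
    have hlip : ‖g (AffineMap.lineMap x y t) - g x‖ ≤ K * (t * ‖y - x‖) := by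
      have := hK.dist_le_mul (AffineMap.lineMap x y t) x
      rwa [dist_lineMap_left, Real.norm_of_nonneg ht.le, dist_eq_norm, dist_comm,
        dist_eq_norm] at this
    calc ⟪g (AffineMap.lineMap x y t) - g x, y - x⟫_ℝ
        ≤ ‖g (AffineMap.lineMap x y t) - g x‖ * ‖y - x‖ := real_inner_le_norm _ _
      _ ≤ K * (t * ‖y - x‖) * ‖y - x‖ := by gcongr
      _ = K * t * ‖y - x‖ ^ 2 := by ring
  have hanti := antitoneOn_of_hasDerivWithinAt_nonpos (convex_Ici 0)
    (fun t _ => (hderiv t).continuousAt.continuousWithinAt)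
    (fun t _ => (hderiv t).hasDerivWithinAt) hnonpos
  have := hanti (self_mem_Ici) (mem_Ici.2 zero_le_one) zero_le_one
  simp only [h, Function.comp_apply, AffineMap.lineMap_apply_one,
    AffineMap.lineMap_apply_zero] at this
  linarith

theorem ConvexOn.sq_norm_sub_le_bregmanDiv {K : ℝ≥0} (hK0 : 0 < K) (hf : ConvexOn ℝ univ f)
    (hg : ∀ u, HasGradientAt f (g u) u) (hK : LipschitzWith K g) (x y : E) :
    ‖g x - g y‖ ^ 2 ≤ 2 * K * bregmanDiv f g x y := by
  have hK0' : (0 : ℝ) < K := hK0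
  set v := g x - g y
  -- the gradient step from `x` for the convex function `u ↦ f u - ⟪g y, u⟫`, minimal at `y`
  set z := x - (K : ℝ)⁻¹ • v
  have hdesc := le_add_inner_add_sq_of_lipschitzWith hg hK x z
  have hconv := hf.add_inner_le (hg y) z
  have hzx : ‖z - x‖ ^ 2 = (K : ℝ)⁻¹ ^ 2 * ‖v‖ ^ 2 := by
    simp [z, norm_smul, mul_pow, abs_of_pos hK0']
  have hgx : ⟪g x, z - x⟫_ℝ = -(K : ℝ)⁻¹ * ⟪g x, v⟫_ℝ := by
    simp [z, inner_neg_right, real_inner_smul_right]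
  have hgy : ⟪g y, z - y⟫_ℝ = ⟪g y, x - y⟫_ℝ - (K : ℝ)⁻¹ * ⟪g y, v⟫_ℝ := by
    rw [show z - y = (x - y) - (K : ℝ)⁻¹ • v by simp only [z]; abel, inner_sub_right,
      real_inner_smul_right]
  have hv : ⟪g x, v⟫_ℝ - ⟪g y, v⟫_ℝ = ‖v‖ ^ 2 := by
    rw [← inner_sub_left, real_inner_self_eq_norm_sq]
  have hK2 : (K : ℝ) / 2 * ((K : ℝ)⁻¹ ^ 2 * ‖v‖ ^ 2) = (K : ℝ)⁻¹ / 2 * ‖v‖ ^ 2 := by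
    field_simp
  have hhalf : (K : ℝ)⁻¹ / 2 * ‖v‖ ^ 2 ≤ bregmanDiv f g x y := by
    rw [hzx, hgx, hK2] at hdesc
    rw [hgy] at hconv
    have : (K : ℝ)⁻¹ * ‖v‖ ^ 2 = (K : ℝ)⁻¹ * ⟪g x, v⟫_ℝ - (K : ℝ)⁻¹ * ⟪g y, v⟫_ℝ := by
      rw [← mul_sub, hv]
    unfold bregmanDiv
    linarith
  calc ‖v‖ ^ 2 = 2 * K * ((K : ℝ)⁻¹ / 2 * ‖v‖ ^ 2) := by field_simp
    _ ≤ 2 * K * bregmanDiv f g x y := by gcongr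

theorem ConvexOn.bregmanDiv_le_of_forall_add_le {F ψ : E → ℝ} {G : E → E} {xstar : E}
    (hψ : ConvexOn ℝ univ ψ) (hF : HasGradientAt F (G xstar) xstar)
    (hmin : ∀ y, F xstar + ψ xstar ≤ F y + ψ y) (y : E) :
    bregmanDiv F G y xstar ≤ F y + ψ y - (F xstar + ψ xstar) := by
  suffices ψ xstar - ψ y ≤ ⟪G xstar, y - xstar⟫_ℝ by unfold bregmanDiv; linarith
  have hslope := (HasGradientAt.hasDerivAt_comp_lineMap (y := y) (t := 0)
    (by simpa using hF)).tendsto_slope_zero_right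
  refine ge_of_tendsto hslope ?_
  filter_upwards [Ioo_mem_nhdsGT (show (0 : ℝ) < 1 from zero_lt_one)] with t ht
  have hψt : ψ (AffineMap.lineMap xstar y t) ≤ (1 - t) * ψ xstar + t * ψ y := by
    simpa [AffineMap.lineMap_apply_module] using
      hψ.2 (mem_univ xstar) (mem_univ y) (sub_nonneg.2 ht.2.le) ht.1.le (sub_add_cancel 1 t)
  have := hmin (AffineMap.lineMap xstar y t)
  simp only [zero_add, Function.comp_apply, AffineMap.lineMap_apply_zero, smul_eq_mul]
  rw [le_inv_mul_iff₀ ht.1]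
  nlinarith

theorem ConvexOn.sq_norm_sub_le_bregmanDiv_add {K : ℝ≥0} (hK0 : 0 < K) (hf : ConvexOn ℝ univ f)
    (hg : ∀ u, HasGradientAt f (g u) u) (hK : LipschitzWith K g) (x w z : E) :
    ‖g x - g w‖ ^ 2 ≤ 4 * K * (bregmanDiv f g x z + bregmanDiv f g w z) := by
  have hx := hf.sq_norm_sub_le_bregmanDiv hK0 hg hK x z
  have hw := hf.sq_norm_sub_le_bregmanDiv hK0 hg hK w z
  calc ‖g x - g w‖ ^ 2 = ‖(g x - g z) - (g w - g z)‖ ^ 2 := by rw [sub_sub_sub_cancel_right]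
    _ ≤ (‖g x - g z‖ + ‖g w - g z‖) ^ 2 := by gcongr; exact norm_sub_le _ _
    _ ≤ 2 * (‖g x - g z‖ ^ 2 + ‖g w - g z‖ ^ 2) := add_sq_le
    _ ≤ 4 * K * (bregmanDiv f g x z + bregmanDiv f g w z) := by linarith

theorem HasGradientAt.sum {ι : Type*} {s : Finset ι} {f : ι → E → ℝ} {g : ι → E} {x : E}
    (h : ∀ i ∈ s, HasGradientAt (f i) (g i) x) :
    HasGradientAt (fun y => ∑ i ∈ s, f i y) (∑ i ∈ s, g i) x := by
  rw [hasGradientAt_iff_hasFDerivAt, map_sum]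
  exact HasFDerivAt.fun_sum fun i hi => (h i hi).hasFDerivAt

theorem HasGradientAt.const_mul (c : ℝ) (h : HasGradientAt f g' x) :
    HasGradientAt (fun y => c * f y) (c • g') x := by
  rw [hasGradientAt_iff_hasFDerivAt, map_smul]
  exact h.hasFDerivAt.const_mul c

end Smooth

section Variance

variable {ι α M E : Type*} [Fintype ι] [DecidableEq ι] [Fintype α] [AddCommMonoid M]
  [NormedAddCommGroup E] [InnerProductSpace ℝ E]

theorem Fintype.sum_comp_eval (τ : ι) (h : α → M) :
    ∑ σ : ι → α, h (σ τ) = (Fintype.card α ^ (Fintype.card ι - 1)) • ∑ a, h a := by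
  rw [← (Equiv.funSplitAt τ α).symm.sum_comp, Fintype.sum_prod_type]
  simp [Fintype.card_subtype_compl, Finset.smul_sum]

theorem Fintype.sum_comp_eval_eval_eq_zero {τ τ' : ι} (hne : τ' ≠ τ) (K : α → α → M)
    (hK : ∀ b, ∑ a, K a b = 0) : ∑ σ : ι → α, K (σ τ) (σ τ') = 0 := by
  rw [← (Equiv.funSplitAt τ α).symm.sum_comp, Fintype.sum_prod_type, Finset.sum_comm]
  simp [Equiv.funSplitAt_symm_apply, hne, hK]

theorem sum_sq_norm_sum_comp_eval (Y : ι → α → E) (hY : ∀ τ, ∑ a, Y τ a = 0) :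
    ∑ σ : ι → α, ‖∑ τ, Y τ (σ τ)‖ ^ 2
      = (Fintype.card α : ℝ) ^ (Fintype.card ι - 1) * ∑ τ, ∑ a, ‖Y τ a‖ ^ 2 := by
  have hcross : ∀ τ τ', τ' ≠ τ → ∑ σ : ι → α, ⟪Y τ (σ τ), Y τ' (σ τ')⟫_ℝ = 0 :=
    fun τ τ' hne => Fintype.sum_comp_eval_eval_eq_zero hne (fun a b => ⟪Y τ a, Y τ' b⟫_ℝ)
      fun b => by rw [← sum_inner, hY, inner_zero_left]
  calc ∑ σ : ι → α, ‖∑ τ, Y τ (σ τ)‖ ^ 2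
      = ∑ τ, ∑ τ', ∑ σ : ι → α, ⟪Y τ (σ τ), Y τ' (σ τ')⟫_ℝ := by
        simp_rw [← real_inner_self_eq_norm_sq, sum_inner, inner_sum]
        rw [Finset.sum_comm]
        exact Finset.sum_congr rfl fun τ _ => Finset.sum_comm
    _ = ∑ τ, ∑ σ : ι → α, ‖Y τ (σ τ)‖ ^ 2 := by
        refine Finset.sum_congr rfl fun τ _ => ?_
        rw [Finset.sum_eq_single τ (fun τ' _ hne => hcross τ τ' hne) (by simp)]
        simp_rw [real_inner_self_eq_norm_sq]
    _ = (Fintype.card α : ℝ) ^ (Fintype.card ι - 1) * ∑ τ, ∑ a, ‖Y τ a‖ ^ 2 := by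
        rw [Finset.mul_sum]
        refine Finset.sum_congr rfl fun τ _ => ?_
        rw [Fintype.sum_comp_eval τ (fun a => ‖Y τ a‖ ^ 2), nsmul_eq_mul, Nat.cast_pow]

theorem sum_sq_norm_sub_average_le (v : α → E) :
    ∑ a, ‖v a - (Fintype.card α : ℝ)⁻¹ • ∑ b, v b‖ ^ 2 ≤ ∑ a, ‖v a‖ ^ 2 := by
  set c := (Fintype.card α : ℝ)⁻¹
  have hc : 0 ≤ c := by positivity
  have hexpand : ∑ a, ‖v a - c • ∑ b, v b‖ ^ 2
      = ∑ a, ‖v a‖ ^ 2 - c * (2 - c * Fintype.card α) * ‖∑ b, v b‖ ^ 2 := by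
    simp_rw [norm_sub_sq_real, Finset.sum_add_distrib, Finset.sum_sub_distrib, ← Finset.mul_sum,
      ← sum_inner, real_inner_smul_right, real_inner_self_eq_norm_sq, norm_smul, Finset.sum_const,
      Finset.card_univ, nsmul_eq_mul, Real.norm_of_nonneg hc]
    ring
  have hcard : c * Fintype.card α ≤ 1 := inv_mul_le_one_of_le₀ le_rfl (Nat.cast_nonneg _)
  rw [hexpand, sub_le_self_iff]
  have := mul_nonneg hc (sq_nonneg ‖∑ b, v b‖)
  nlinarith

theorem variance_average_le_sum_sq_norm [Nonempty ι] [Nonempty α] (v : ι → α → E) :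
    1 / (Fintype.card α : ℝ) ^ Fintype.card ι * ∑ σ : ι → α,
        ‖(1 / (Fintype.card ι : ℝ)) • ∑ τ, v τ (σ τ)
          - (1 / ((Fintype.card ι : ℝ) * Fintype.card α)) • ∑ τ, ∑ a, v τ a‖ ^ 2
      ≤ 1 / ((Fintype.card ι : ℝ) ^ 2 * Fintype.card α) * ∑ τ, ∑ a, ‖v τ a‖ ^ 2 := by
  have hm : (Fintype.card α : ℝ) ≠ 0 := Nat.cast_ne_zero.2 Fintype.card_ne_zero
  set μ : ι → E := fun τ => (Fintype.card α : ℝ)⁻¹ • ∑ a, v τ a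
  set Y : ι → α → E := fun τ a => v τ a - μ τ
  have hY : ∀ τ, ∑ a, Y τ a = 0 := fun τ => by
    simp only [Y, μ, Finset.sum_sub_distrib, Finset.sum_const, Finset.card_univ,
      ← Nat.cast_smul_eq_nsmul ℝ, smul_smul, mul_inv_cancel₀ hm, one_smul, sub_self]
  have hcentred : ∀ σ : ι → α, (1 / (Fintype.card ι : ℝ)) • ∑ τ, v τ (σ τ)
      - (1 / ((Fintype.card ι : ℝ) * Fintype.card α)) • ∑ τ, ∑ a, v τ a
      = (1 / (Fintype.card ι : ℝ)) • ∑ τ, Y τ (σ τ) := fun σ => by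
    simp only [Y, μ, Finset.sum_sub_distrib, smul_sub, Finset.smul_sum, smul_smul]
    congr 2 with τ
    field_simp
  have hpow : (Fintype.card α : ℝ) ^ Fintype.card ι
      = (Fintype.card α : ℝ) ^ (Fintype.card ι - 1) * Fintype.card α := by
    rw [← pow_succ, Nat.sub_add_cancel Fintype.card_pos]
  calc _ = 1 / ((Fintype.card ι : ℝ) ^ 2 * Fintype.card α) * ∑ τ, ∑ a, ‖Y τ a‖ ^ 2 := by
        simp_rw [hcentred, norm_smul, mul_pow, ← Finset.mul_sum, sum_sq_norm_sum_comp_eval Y hY,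
          hpow, Real.norm_of_nonneg (one_div_nonneg.2 (Nat.cast_nonneg _))]
        field_simp
    _ ≤ 1 / ((Fintype.card ι : ℝ) ^ 2 * Fintype.card α) * ∑ τ, ∑ a, ‖v τ a‖ ^ 2 :=
        mul_le_mul_of_nonneg_left
          (Finset.sum_le_sum fun τ _ => sum_sq_norm_sub_average_le (v τ)) (by positivity)

end Variance

/-- Variance bound: the expected squared norm (over independent uniform indices
`σ : Fin n → Fin m`) of the averaged stochastic gradient difference minus its mean
`∇f(x) − ∇f(w)` is bounded by `(4L/n)[P(x)−P(x*) + P(w)−P(x*)]`. -/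
theorem variance_bound_stochastic_grad {d m n : ℕ} (hm : 0 < m) (hn : 0 < n)
    (L : ℝ) (hL : 0 < L)
    (f : Fin n → Fin m → EuclideanSpace ℝ (Fin d) → ℝ)
    (g : Fin n → Fin m → EuclideanSpace ℝ (Fin d) → EuclideanSpace ℝ (Fin d))
    (hconv : ∀ τ i, ConvexOn ℝ Set.univ (f τ i))
    (hgrad : ∀ τ i x, HasGradientAt (f τ i) (g τ i x) x)
    (hlip : ∀ τ i, LipschitzWith (Real.toNNReal L) (g τ i))
    (F : EuclideanSpace ℝ (Fin d) → ℝ)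
    (hF : ∀ y, F y = (1 / ((n : ℝ) * m)) * ∑ τ, ∑ i, f τ i y)
    (gF : EuclideanSpace ℝ (Fin d) → EuclideanSpace ℝ (Fin d))
    (hgradF : ∀ x, HasGradientAt F (gF x) x)
    (ψ : EuclideanSpace ℝ (Fin d) → ℝ) (hψ : ConvexOn ℝ Set.univ ψ)
    (P : EuclideanSpace ℝ (Fin d) → ℝ) (hP : ∀ y, P y = F y + ψ y)
    (xstar : EuclideanSpace ℝ (Fin d)) (hmin : ∀ y, P xstar ≤ P y)
    (xk wk : EuclideanSpace ℝ (Fin d)) :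
    (1 / (m : ℝ) ^ n) * ∑ σ : Fin n → Fin m,
        ‖(1 / (n : ℝ)) • ∑ τ, (g τ (σ τ) xk - g τ (σ τ) wk) + (gF wk - gF xk)‖ ^ 2 ≤
      (4 * L / n) * ((P xk - P xstar) + (P wk - P xstar)) := by
  have hK : (0 : ℝ≥0) < Real.toNNReal L := Real.toNNReal_pos.2 hL
  have hgF : ∀ u, gF u = (1 / ((n : ℝ) * m)) • ∑ τ, ∑ i, g τ i u := fun u =>
    (hgradF u).unique <| funext hF ▸
      (HasGradientAt.sum fun τ _ => HasGradientAt.sum fun i _ => hgrad τ i u).const_mul _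
  have hbregman : ∀ y, ∑ τ, ∑ i, bregmanDiv (f τ i) (g τ i) y xstar
      = n * m * bregmanDiv F gF y xstar := fun y => by
    simp only [bregmanDiv, hF, hgF, Finset.sum_sub_distrib, real_inner_smul_left, sum_inner]
    field_simp
  have hopt : ∀ y, bregmanDiv F gF y xstar ≤ P y - P xstar := fun y => by
    simpa only [hP] using
      hψ.bregmanDiv_le_of_forall_add_le (hgradF xstar) (fun y => by simpa only [hP] using hmin y) y
  have : Nonempty (Fin n) := ⟨⟨0, hn⟩⟩
  have : Nonempty (Fin m) := ⟨⟨0, hm⟩⟩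
  calc _ = 1 / (m : ℝ) ^ n * ∑ σ : Fin n → Fin m,
        ‖(1 / (n : ℝ)) • ∑ τ, (g τ (σ τ) xk - g τ (σ τ) wk)
          - (1 / ((n : ℝ) * m)) • ∑ τ, ∑ i, (g τ i xk - g τ i wk)‖ ^ 2 := by
        refine congrArg _ (Finset.sum_congr rfl fun σ _ => ?_)
        simp only [hgF, Finset.sum_sub_distrib]
        congr 2
        module
    _ ≤ 1 / ((n : ℝ) ^ 2 * m) * ∑ τ, ∑ i, ‖g τ i xk - g τ i wk‖ ^ 2 := by
        simpa using variance_average_le_sum_sq_norm fun τ i => g τ i xk - g τ i wk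
    _ ≤ 1 / ((n : ℝ) ^ 2 * m) * ∑ τ, ∑ i, 4 * L * (bregmanDiv (f τ i) (g τ i) xk xstar
          + bregmanDiv (f τ i) (g τ i) wk xstar) := by
        gcongr with τ _ i _
        simpa [hL.le] using
          (hconv τ i).sq_norm_sub_le_bregmanDiv_add hK (hgrad τ i) (hlip τ i) xk wk xstar
    _ = 4 * L / n * (bregmanDiv F gF xk xstar + bregmanDiv F gF wk xstar) := by
        simp only [← Finset.mul_sum, Finset.sum_add_distrib, hbregman]
        field_simp
    _ ≤ 4 * L / n * ((P xk - P xstar) + (P wk - P xstar)) := by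
        gcongr
        exacts [hopt xk, hopt wk]
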